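/- arXiv:1905.08785 — 4 statements merged into one kernel-verified Lean document; each statement's English description precedes it below -/
import Mathlib

section
/- Let X be a topological space and V(t) : C_b(X) → C_b(X), t ≥ 0, a semigroup of maps with V(0) = id. Define the conditional cost I_t(y | x) := sup_{f ∈ C_b(X)} ( f(y) − V(t)f(x) ). Suppose V(t) is contractive in the sense that sup_x (V(t)f_1(x) − V(t)f_2(x)) ≤ sup_x (f_1(x) − f_2(x)) for all f_1, f_2 and that V(t)0 = 0 for all t. Then I_t(y|x) ≥ 0 for all t, x, y with I_0(x|x) = 0, and the Chapman–Kolmogorov-type subadditivity holds: I_{s+t}(z | x) ≤ inf_{y ∈ X} ( I_s(y | x) + I_t(z | y) ). -/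
open Filter Topology
open scoped NNReal

/-- For a contractive semigroup `V(t)` on `C_b(X)` with `V(0) = id` and
`V(t) 0 = 0`, the conditional cost `I_t(y|x) = ⨆_{f ∈ C_b(X)} (f y - V(t) f x)` is
nonnegative, vanishes at `t = 0, y = x`, and satisfies Chapman–Kolmogorov type
subadditivity. -/
theorem conditional_cost_properties {X : Type*} [TopologicalSpace X]
    (V : ℝ≥0 → BoundedContinuousFunction X ℝ → BoundedContinuousFunction X ℝ)
    (hV0 : V 0 = id)
    (hVsg : ∀ s t f, V (s + t) f = V s (V t f))
    (hVzero : ∀ t, V t 0 = 0)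
    (hcontr : ∀ (t : ℝ≥0) (f₁ f₂ : BoundedContinuousFunction X ℝ) (C : ℝ),
      (∀ y, f₁ y - f₂ y ≤ C) → ∀ x, V t f₁ x - V t f₂ x ≤ C) :
    (∀ (t : ℝ≥0) (x y : X),
        (0 : EReal) ≤ ⨆ f : BoundedContinuousFunction X ℝ,
          ((f y : EReal) - (V t f x : EReal))) ∧
    (∀ x : X, (⨆ f : BoundedContinuousFunction X ℝ,
        ((f x : EReal) - (V 0 f x : EReal))) = 0) ∧
    (∀ (s t : ℝ≥0) (x z : X),
        (⨆ f : BoundedContinuousFunction X ℝ,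
            ((f z : EReal) - (V (s + t) f x : EReal))) ≤
          ⨅ y : X,
            ((⨆ f : BoundedContinuousFunction X ℝ,
                ((f y : EReal) - (V s f x : EReal))) +
              ⨆ f : BoundedContinuousFunction X ℝ,
                ((f z : EReal) - (V t f y : EReal)))) := by
  constructor
  · intro t x y
    have h : ((0 : BoundedContinuousFunction X ℝ) y : EReal) - (V t 0 x : EReal) = 0 := by
      rw [hVzero]; simp
    calc (0 : EReal) = ((0 : BoundedContinuousFunction X ℝ) y : EReal) - (V t 0 x : EReal) :=
          h.symm
      _ ≤ _ := le_iSup (fun f : BoundedContinuousFunction X ℝ =>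
          ((f y : EReal) - (V t f x : EReal))) 0
  constructor
  · intro x
    have h : ∀ f : BoundedContinuousFunction X ℝ,
        ((f x : EReal) - (V 0 f x : EReal)) = 0 := by
      intro f; rw [hV0, ← EReal.coe_sub]; simp
    simp [h]
  · intro s t x z
    refine le_iInf fun y => iSup_le fun f => ?_
    have key : ((f z : EReal) - (V (s + t) f x : EReal)) =
        (((V t f) y : EReal) - (V s (V t f) x : EReal)) +
        ((f z : EReal) - ((V t f) y : EReal)) := by
      rw [hVsg]
      rw [← EReal.coe_sub, ← EReal.coe_sub, ← EReal.coe_sub, ← EReal.coe_add]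
      norm_cast
      ring
    rw [key]
    refine add_le_add ?_ ?_
    · exact le_iSup (fun g : BoundedContinuousFunction X ℝ =>
        ((g y : EReal) - (V s g x : EReal))) (V t f)
    · exact le_iSup (fun g : BoundedContinuousFunction X ℝ =>
        ((g z : EReal) - (V t g y : EReal))) f
end

section
/- Let X be a topological space whose compact subsets are metrizable, J : X → [0,∞] a coercive lower semicontinuous functional with dual Λ(f) = sup_x (f(x) − J(x)). Let D ⊆ C_b(X) be a family that is bounded above (sup_{f∈D} sup_x f(x) < ∞) and isolates points: for all x, m > 0, compact K, and open U ∋ x there is f ∈ D with |f(x)| ≤ 1/m, sup_K f ≤ 0, and sup_{K ∩ Uᶜ} f ≤ −m. Then for every x with J(x) = ∞ we have sup_{f ∈ D} ( f(x) − Λ(f) ) = ∞. -/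
open Filter Topology

/-- If `D ⊆ C_b(X)` is bounded above and isolates points, `J` is coercive
and lower semicontinuous with dual `Λ`, then at every point where `J x = ∞` also
`⨆ f ∈ D, (f x - Λ f) = ∞`. -/
theorem dual_representation_at_infinity {X : Type*} [TopologicalSpace X]
    (hmet : ∀ K : Set X, IsCompact K → TopologicalSpace.MetrizableSpace K)
    (J : X → EReal) (hJ0 : ∀ x, 0 ≤ J x)
    (hlsc : LowerSemicontinuous J)
    (hcoer : ∀ M : ℝ, IsCompact {x | J x ≤ (M : EReal)})
    (D : Set (BoundedContinuousFunction X ℝ))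
    (hbdd : ∃ C : ℝ, ∀ f ∈ D, ∀ x : X, f x ≤ C)
    (hiso : ∀ (x : X) (m : ℝ), 0 < m → ∀ K : Set X, IsCompact K →
      ∀ U : Set X, IsOpen U → x ∈ U →
        ∃ f ∈ D, |f x| ≤ 1 / m ∧ (∀ y ∈ K, f y ≤ 0) ∧ ∀ y ∈ K \ U, f y ≤ -m) :
    ∀ x : X, J x = ⊤ →
      (⨆ f ∈ D, ((f x : EReal) - ⨆ y : X, ((f y : EReal) - J y))) = ⊤ := by
  obtain ⟨C₀, hC₀⟩ := hbdd
  set C := max C₀ 0 with hCdef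
  have hC : ∀ f ∈ D, ∀ x : X, f x ≤ C := fun f hf x => (hC₀ f hf x).trans (le_max_left _ _)
  have hC0 : (0 : ℝ) ≤ C := le_max_right _ _
  intro x hx
  rw [EReal.eq_top_iff_forall_lt]
  intro r
  set m : ℝ := |r| + C + 2 with hmdef
  have hm : 0 < m := by positivity
  have hm1 : 1 ≤ m := by
    have := abs_nonneg r; simp only [hmdef]; linarith
  set K := {y : X | J y ≤ ((C + m : ℝ) : EReal)} with hKdef
  have hK := hcoer (C + m)
  have hlt : ((C + m : ℝ) : EReal) < J x := by
    rw [hx]; exact EReal.coe_lt_top _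
  obtain ⟨U, hUsub, hUopen, hxU⟩ := mem_nhds_iff.1 (hlsc x _ hlt)
  obtain ⟨f, hfD, hfx, hfK, hfKU⟩ := hiso x m hm K hK U hUopen hxU
  have hΛ : (⨆ y : X, ((f y : EReal) - J y)) ≤ ((-m : ℝ) : EReal) := by
    refine iSup_le fun y => ?_
    by_cases hy : y ∈ K
    · have hyU : y ∉ U := by
        intro hU
        exact absurd hy (by simpa [hKdef] using not_le.2 (hUsub hU))
      have hf' : f y ≤ -m := hfKU y ⟨hy, hyU⟩
      calc (f y : EReal) - J y ≤ ((-m : ℝ) : EReal) - 0 :=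
            EReal.sub_le_sub (by exact_mod_cast hf') (hJ0 y)
        _ = ((-m : ℝ) : EReal) := by rw [sub_zero]
    · have hy' : ((C + m : ℝ) : EReal) ≤ J y := le_of_lt (not_le.1 hy)
      calc (f y : EReal) - J y ≤ ((C : ℝ) : EReal) - ((C + m : ℝ) : EReal) :=
            EReal.sub_le_sub (by exact_mod_cast hC f hfD y) hy'
        _ = ((-m : ℝ) : EReal) := by rw [← EReal.coe_sub]; norm_num
  have hfx' : -(1 : ℝ) ≤ f x := by
    have h1 : 1 / m ≤ 1 := by
      rw [div_le_one hm]; exact hm1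
    have := (abs_le.1 hfx).1
    linarith
  have key : (r : EReal) < (f x : EReal) - (⨆ y : X, ((f y : EReal) - J y)) := by
    have h1 : (f x : EReal) - (⨆ y : X, ((f y : EReal) - J y)) ≥
        (f x : EReal) - ((-m : ℝ) : EReal) := EReal.sub_le_sub le_rfl hΛ
    have h2 : (f x : EReal) - ((-m : ℝ) : EReal) = ((f x + m : ℝ) : EReal) := by
      rw [← EReal.coe_sub]; norm_num
    have h3 : r < f x + m := by
      have := le_abs_self r
      simp only [hmdef]; linarith
    exact lt_of_lt_of_le (by exact_mod_cast h3) (h2 ▸ h1)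
  exact lt_of_lt_of_le key (le_iSup₂ (f := fun f _ => (f x : EReal) - ⨆ y : X, ((f y : EReal) - J y)) f hfD)
end

section
/- Let X be a topological space, J : X → [0,∞] coercive and lower semicontinuous, Λ(f) = sup_x (f(x) − J(x)) its dual functional, and let D ⊆ C_b(X) be bounded above and isolate points (per the three conditions: for all x, m > 0, compact K, open U ∋ x there is f ∈ D with |f(x)| ≤ 1/m, f ≤ 0 on K, f ≤ −m on K ∩ Uᶜ). Then D is functional determining: J(x) = sup_{f ∈ D} ( f(x) − Λ(f) ) for all x ∈ X. -/
open Filter Topology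

/-- A family `D ⊆ C_b(X)` that is bounded above and isolates points is
functional determining: `J x = ⨆ f ∈ D, (f x - Λ f)` for every coercive lower
semicontinuous `J` with dual `Λ`. -/
theorem functional_determining {X : Type*} [TopologicalSpace X]
    (hmet : ∀ K : Set X, IsCompact K → TopologicalSpace.MetrizableSpace K)
    (J : X → EReal) (hJ0 : ∀ x, 0 ≤ J x)
    (hlsc : LowerSemicontinuous J)
    (hcoer : ∀ M : ℝ, IsCompact {x | J x ≤ (M : EReal)})
    (D : Set (BoundedContinuousFunction X ℝ))
    (hbdd : ∃ C : ℝ, ∀ f ∈ D, ∀ x : X, f x ≤ C)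
    (hiso : ∀ (x : X) (m : ℝ), 0 < m → ∀ K : Set X, IsCompact K →
      ∀ U : Set X, IsOpen U → x ∈ U →
        ∃ f ∈ D, |f x| ≤ 1 / m ∧ (∀ y ∈ K, f y ≤ 0) ∧ ∀ y ∈ K \ U, f y ≤ -m) :
    ∀ x : X,
      J x = ⨆ f ∈ D, ((f x : EReal) - ⨆ y : X, ((f y : EReal) - J y)) := by
  intro x
  obtain ⟨C, hC⟩ := hbdd
  apply le_antisymm
  · -- J x ≤ sup
    rw [← EReal.ge_of_forall_gt_iff_ge]
    intro c hc
    -- pick real r with c < r < J x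
    obtain ⟨r, hcr, hrJ⟩ := EReal.lt_iff_exists_real_btwn.mp hc
    have hcr' : c < r := by exact_mod_cast hcr
    set m : ℝ := max r (1 / (r - c)) with hm
    have hm0 : 0 < m := lt_of_lt_of_le (one_div_pos.mpr (by linarith)) (le_max_right _ _)
    have h1m : 1 / m ≤ r - c :=
      (one_div_le hm0 (by linarith)).mpr (le_max_right _ _)
    set U : Set X := {y | (r : EReal) < J y} with hU
    have hUopen : IsOpen U := hlsc.isOpen_preimage r
    have hxU : x ∈ U := hrJ
    set K : Set X := {y | J y ≤ ((C + r : ℝ) : EReal)} with hK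
    obtain ⟨f, hfD, hfx, hfK, hfKU⟩ := hiso x m hm0 K (hcoer (C + r)) U hUopen hxU
    have hΛ : (⨆ y : X, ((f y : EReal) - J y)) ≤ ((-r : ℝ) : EReal) := by
      refine iSup_le fun y => ?_
      by_cases hyK : y ∈ K
      · by_cases hyU : y ∈ U
        · calc (f y : EReal) - J y ≤ ((0 : ℝ) : EReal) - (r : EReal) :=
                EReal.sub_le_sub (by exact_mod_cast hfK y hyK) (le_of_lt hyU)
            _ = ((-r : ℝ) : EReal) := by norm_cast; ring
        · calc (f y : EReal) - J y ≤ ((-m : ℝ) : EReal) - (0 : EReal) :=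
                EReal.sub_le_sub (by exact_mod_cast hfKU y ⟨hyK, hyU⟩) (hJ0 y)
            _ = ((-m : ℝ) : EReal) := by rw [sub_zero]
            _ ≤ ((-r : ℝ) : EReal) := by
                exact_mod_cast neg_le_neg (le_max_left _ _)
      · have : ((C + r : ℝ) : EReal) ≤ J y := le_of_not_ge hyK
        calc (f y : EReal) - J y ≤ ((C : ℝ) : EReal) - ((C + r : ℝ) : EReal) :=
              EReal.sub_le_sub (by exact_mod_cast hC f hfD y) this
          _ = ((-r : ℝ) : EReal) := by norm_cast; ring
    refine le_trans ?_ (le_iSup₂_of_le f hfD (le_refl _))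
    calc (c : EReal) ≤ ((f x + r : ℝ) : EReal) := by
          have : -(1 / m) ≤ f x := neg_le_of_abs_le hfx
          exact_mod_cast by linarith
      _ = (f x : EReal) - ((-r : ℝ) : EReal) := by norm_cast; ring
      _ ≤ (f x : EReal) - ⨆ y : X, ((f y : EReal) - J y) :=
          EReal.sub_le_sub le_rfl hΛ
  · -- sup ≤ J x
    refine iSup₂_le fun f hf => ?_
    have h1 : (f x : EReal) - J x ≤ ⨆ y : X, ((f y : EReal) - J y) :=
      le_iSup (fun y => (f y : EReal) - J y) x
    rcases eq_or_ne (J x) ⊤ with hT | hT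
    · rw [hT]; exact le_top
    · have hB : J x ≠ ⊥ := ne_of_gt (lt_of_lt_of_le (by simp) (hJ0 x))
      set b : ℝ := (J x).toReal with hb
      have hbJ : (b : EReal) = J x := EReal.coe_toReal hT hB
      rw [← hbJ] at h1 ⊢
      calc (f x : EReal) - ⨆ y : X, ((f y : EReal) - J y)
          ≤ (f x : EReal) - ((f x : EReal) - (b : EReal)) :=
            EReal.sub_le_sub le_rfl h1
        _ = (b : EReal) := by norm_cast; ring
end

section
/- Let X be a topological space with metrizable compacts, J : X → [0,∞] coercive and lower semicontinuous, Λ its dual functional, D ⊆ C_b(X) bounded above by M₂ and isolating points, and x ∈ X with J(x) < ∞. Let K be the compact set {y : J(y) ≤ J(x) + M₂ + 2}, with metric d. Then there exist functions f_m ∈ D, m ≥ 1, such that |f_m(x)| ≤ 1/m, sup_{y∈K} f_m(y) ≤ 0, sup_{y ∈ K, d(y,x) ≥ 1/m} f_m(y) ≤ −m, and Λ(f_m) → −J(x) as m → ∞. -/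
/-!
Take `f_m ∈ D` isolating `x` at scale `m` against the relatively open set `{d(·, x) < 1/m}` of
`K`. Then `Λ(f_m) ≥ f_m(x) - J(x) → -J(x)`. For the upper bound split `X` into three regions:
off `K` we have `f_m - J ≤ M₂ - J < -J(x)`; on `K` away from a neighbourhood of `x` where
`J > J(x) - ε` (by lower semicontinuity), compactness keeps `d(·, x)` above some `δ > 0`, so
`f_m ≤ -m` there for large `m`; on the rest of `K`, `f_m ≤ 0` and `J > J(x) - ε`.
-/

open Filter Topology Set

section

variable {X : Type*} [TopologicalSpace X]

def IsolatesPoints (D : Set (BoundedContinuousFunction X ℝ)) : Prop :=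
  ∀ (x : X) (m : ℝ), 0 < m → ∀ K : Set X, IsCompact K → ∀ U : Set X, IsOpen U → x ∈ U →
    ∃ f ∈ D, |f x| ≤ 1 / m ∧ (∀ y ∈ K, f y ≤ 0) ∧ ∀ y ∈ K \ U, f y ≤ -m

noncomputable def dualFunctional (J : X → EReal) (f : X → ℝ) : EReal :=
  ⨆ y, (f y : EReal) - J y

lemma EReal.coe_sub_le_of_coe_le {a b c : ℝ} {e : EReal} (he : (b : EReal) ≤ e)
    (h : a - b ≤ c) : (a : EReal) - e ≤ c :=
  calc (a : EReal) - e ≤ a - b := EReal.sub_le_sub le_rfl he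
    _ = ((a - b : ℝ) : EReal) := (EReal.coe_sub a b).symm
    _ ≤ c := EReal.coe_le_coe_iff.2 h

lemma IsolatesPoints.exists_le_neg_of_le {D : Set (BoundedContinuousFunction X ℝ)}
    (hD : IsolatesPoints D) {K : Set X} (hK : IsCompact K) {x : X} (hxK : x ∈ K)
    {g : X → ℝ} (hg : ContinuousOn g K) (hgx : g x = 0) {m ε : ℝ} (hm : 0 < m) (hε : 0 < ε) :
    ∃ f ∈ D, |f x| ≤ 1 / m ∧ (∀ y ∈ K, f y ≤ 0) ∧ ∀ y ∈ K, ε ≤ g y → f y ≤ -m := by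
  obtain ⟨U, hU, hxU, hUK⟩ :=
    continuousOn_iff.1 hg x hxK (Iio ε) isOpen_Iio (by simpa [hgx] using hε)
  obtain ⟨f, hfD, hfx, hfK, hfU⟩ := hD x m hm K hK U hU hxU
  refine ⟨f, hfD, hfx, hfK, fun y hy hεy => hfU y ⟨hy, fun hyU => ?_⟩⟩
  exact (hUK ⟨hyU, hy⟩ : g y < ε).not_ge hεy

lemma IsCompact.exists_pos_le_of_mem_nhds {K : Set X} (hK : IsCompact K) {g : X → ℝ}
    (hg : ContinuousOn g K) {x : X} (hpos : ∀ y ∈ K, y ≠ x → 0 < g y) {U : Set X}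
    (hU : U ∈ 𝓝 x) : ∃ δ > 0, ∀ y ∈ K \ U, δ ≤ g y := by
  obtain ⟨δ, hδ, hle⟩ := (hK.diff isOpen_interior).exists_forall_le' (hg.mono sdiff_subset)
    (a := 0) fun y hy => hpos y hy.1 (by rintro rfl; exact hy.2 (mem_interior_iff_mem_nhds.2 hU))
  exact ⟨δ, hδ, fun y hy => hle y ⟨hy.1, fun hyU => hy.2 (interior_subset hyU)⟩⟩

lemma IsCompact.eventually_forall_mem_diff_le {K : Set X} (hK : IsCompact K)
    {g : X → ℝ} (hg : ContinuousOn g K) {x : X} (hpos : ∀ y ∈ K, y ≠ x → 0 < g y)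
    {f : ℕ → X → ℝ} (hf : ∀ m : ℕ, 1 ≤ m → ∀ y ∈ K, 1 / (m : ℝ) ≤ g y → f m y ≤ -(m : ℝ))
    {U : Set X} (hU : U ∈ 𝓝 x) (c : ℝ) : ∀ᶠ m in atTop, ∀ y ∈ K \ U, f m y ≤ c := by
  obtain ⟨δ, hδ, hδU⟩ := hK.exists_pos_le_of_mem_nhds hg hpos hU
  filter_upwards [eventually_ge_atTop 1,
    tendsto_one_div_atTop_nhds_zero_nat.eventually (eventually_lt_nhds hδ),
    tendsto_natCast_atTop_atTop.eventually_ge_atTop (-c)] with m hm hmδ hmc y hy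
  linarith [hf m hm y hy.1 (hmδ.le.trans (hδU y hy))]

section dualFunctional

variable {J : X → EReal} {x : X} {r : ℝ} {f : ℕ → X → ℝ}

lemma eventually_dualFunctional_le (hJ0 : ∀ y, 0 ≤ J y) (hJx : LowerSemicontinuousAt J x)
    (hr : J x = r) {K : Set X} {M : ℝ} (hK : ∀ y ∉ K, ((r + M : ℝ) : EReal) ≤ J y)
    (hfM : ∀ᶠ m in atTop, ∀ y, f m y ≤ M) (hfK : ∀ᶠ m in atTop, ∀ y ∈ K, f m y ≤ 0)
    (hfar : ∀ U ∈ 𝓝 x, ∀ c : ℝ, ∀ᶠ m in atTop, ∀ y ∈ K \ U, f m y ≤ c)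
    {q : ℝ} (hq : -r < q) : ∀ᶠ m in atTop, dualFunctional J (f m) ≤ q := by
  have hU : {y | ((-q : ℝ) : EReal) < J y} ∈ 𝓝 x :=
    hJx _ (show ((-q : ℝ) : EReal) < J x by rw [hr]; exact EReal.coe_lt_coe_iff.2 (by linarith))
  filter_upwards [hfM, hfK, hfar _ hU q] with m hM hK0 hfar
  refine iSup_le fun y => ?_
  by_cases hyK : y ∈ K
  · by_cases hyU : ((-q : ℝ) : EReal) < J y
    · exact EReal.coe_sub_le_of_coe_le hyU.le (by linarith [hK0 y hyK])
    · exact EReal.coe_sub_le_of_coe_le (b := 0) (hJ0 y) (by linarith [hfar y ⟨hyK, hyU⟩])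
  · exact EReal.coe_sub_le_of_coe_le (hK y hyK) (by linarith [hM y])

lemma tendsto_dualFunctional (hJ0 : ∀ y, 0 ≤ J y) (hJx : LowerSemicontinuousAt J x)
    (hr : J x = r) {K : Set X} {M : ℝ} (hK : ∀ y ∉ K, ((r + M : ℝ) : EReal) ≤ J y)
    (hfx : Tendsto (fun m => f m x) atTop (𝓝 0))
    (hfM : ∀ᶠ m in atTop, ∀ y, f m y ≤ M) (hfK : ∀ᶠ m in atTop, ∀ y ∈ K, f m y ≤ 0)
    (hfar : ∀ U ∈ 𝓝 x, ∀ c : ℝ, ∀ᶠ m in atTop, ∀ y ∈ K \ U, f m y ≤ c) :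
    Tendsto (fun m => dualFunctional J (f m)) atTop (𝓝 (-(r : EReal))) := by
  have hlow : Tendsto (fun m => ((f m x - r : ℝ) : EReal)) atTop (𝓝 ((-r : ℝ) : EReal)) :=
    EReal.tendsto_coe.2 (by simpa using hfx.sub_const r)
  refine tendsto_order.2 ⟨fun a ha => ?_, fun a ha => ?_⟩
  · filter_upwards [hlow.eventually (eventually_gt_nhds ha)] with m hm
    refine hm.trans_le (le_iSup_of_le x ?_)
    rw [hr, EReal.coe_sub]
  · obtain ⟨q, hrq, hqa⟩ := EReal.exists_between_coe_real ha
    filter_upwards [eventually_dualFunctional_le hJ0 hJx hr hK hfM hfK hfar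
      (EReal.coe_lt_coe_iff.1 hrq)] with m hm
    exact hm.trans_lt hqa

end dualFunctional

end

theorem isolating_functions_approximate_general {X : Type*} [TopologicalSpace X]
    (J : X → EReal) (hJ0 : ∀ x, 0 ≤ J x)
    (hlsc : LowerSemicontinuous J)
    (D : Set (BoundedContinuousFunction X ℝ)) (M₂ : ℝ)
    (hbdd : ∀ f ∈ D, ∀ y : X, f y ≤ M₂)
    (hiso : ∀ (x : X) (m : ℝ), 0 < m → ∀ K : Set X, IsCompact K →
      ∀ U : Set X, IsOpen U → x ∈ U →
        ∃ f ∈ D, |f x| ≤ 1 / m ∧ (∀ y ∈ K, f y ≤ 0) ∧ ∀ y ∈ K \ U, f y ≤ -m)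
    (x : X) (hx : J x ≠ ⊤)
    (K : Set X) (hKdef : K = {y | J y ≤ J x + (M₂ : EReal) + 2})
    (hKcomp : IsCompact K) (hxK : x ∈ K)
    (d : X → X → ℝ)
    (hd_eq : ∀ y ∈ K, ∀ z ∈ K, (d y z = 0 ↔ y = z))
    (hd_nonneg : ∀ y ∈ K, ∀ z ∈ K, 0 ≤ d y z)
    (hd_cont : ContinuousOn (fun p : X × X => d p.1 p.2) (K ×ˢ K)) :
    ∃ f : ℕ → BoundedContinuousFunction X ℝ,
      (∀ m : ℕ, 1 ≤ m →
        f m ∈ D ∧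
        |f m x| ≤ 1 / (m : ℝ) ∧
        (∀ y ∈ K, f m y ≤ 0) ∧
        (∀ y ∈ K, 1 / (m : ℝ) ≤ d y x → f m y ≤ -(m : ℝ))) ∧
      Tendsto (fun m : ℕ => ⨆ y : X, ((f m y : EReal) - J y)) atTop (𝓝 (-(J x))) := by
  obtain ⟨r, hr⟩ : ∃ r : ℝ, J x = r :=
    ⟨_, (EReal.coe_toReal hx (EReal.bot_lt_zero.trans_le (hJ0 x)).ne').symm⟩
  have hdx : ContinuousOn (fun y => d y x) K :=
    hd_cont.comp (continuousOn_id.prodMk continuousOn_const) fun y hy => mk_mem_prod hy hxK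
  have hdx_pos : ∀ y ∈ K, y ≠ x → 0 < d y x := fun y hy hyx =>
    (hd_nonneg y hy x hxK).lt_of_ne' fun h => hyx ((hd_eq y hy x hxK).1 h)
  have hexists : ∀ m : ℕ, ∃ f : BoundedContinuousFunction X ℝ, 1 ≤ m → f ∈ D ∧
      |f x| ≤ 1 / (m : ℝ) ∧ (∀ y ∈ K, f y ≤ 0) ∧ ∀ y ∈ K, 1 / (m : ℝ) ≤ d y x → f y ≤ -(m : ℝ) := by
    intro m
    rcases Nat.eq_zero_or_pos m with rfl | hm
    · exact ⟨0, by simp⟩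
    · obtain ⟨f, hf⟩ := IsolatesPoints.exists_le_neg_of_le hiso hKcomp hxK hdx
        ((hd_eq x hxK x hxK).2 rfl) (Nat.cast_pos.2 hm) (one_div_pos.2 (Nat.cast_pos.2 hm))
      exact ⟨f, fun _ => hf⟩
  choose f hf using hexists
  refine ⟨f, hf, ?_⟩
  have hK : ∀ y ∉ K, ((r + M₂ : ℝ) : EReal) ≤ J y := fun y hy => by
    have : J x + M₂ + 2 < J y := by simpa [hKdef] using hy
    refine le_trans ?_ this.le
    rw [hr]
    exact le_add_of_nonneg_right (by norm_num)
  have hfx : Tendsto (fun m => f m x) atTop (𝓝 0) :=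
    squeeze_zero_norm' (by filter_upwards [eventually_ge_atTop 1] with m hm using (hf m hm).2.1)
      tendsto_one_div_atTop_nhds_zero_nat
  rw [hr]
  exact tendsto_dualFunctional hJ0 (hlsc x) hr hK hfx
    (by filter_upwards [eventually_ge_atTop 1] with m hm using hbdd _ (hf m hm).1)
    (by filter_upwards [eventually_ge_atTop 1] with m hm using (hf m hm).2.2.1)
    fun U hU => hKcomp.eventually_forall_mem_diff_le hdx hdx_pos
      (fun m hm => (hf m hm).2.2.2) hU

/-- Given a coercive lower semicontinuous `J`, a family `D` bounded
above by `M₂` that isolates points, a point `x` with `J x < ∞`, and the compact set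
`K = {y | J y ≤ J x + M₂ + 2}` with a compatible metric `d` on it, there are
functions `f_m ∈ D` with `|f_m x| ≤ 1/m`, `f_m ≤ 0` on `K`, `f_m ≤ -m` on
`K ∩ {d(·,x) ≥ 1/m}`, and `Λ(f_m) → -J x`. -/
theorem isolating_functions_approximate {X : Type*} [TopologicalSpace X]
    (hmet : ∀ K : Set X, IsCompact K → TopologicalSpace.MetrizableSpace K)
    (J : X → EReal) (hJ0 : ∀ x, 0 ≤ J x)
    (hlsc : LowerSemicontinuous J)
    (hcoer : ∀ M : ℝ, IsCompact {x | J x ≤ (M : EReal)})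
    (D : Set (BoundedContinuousFunction X ℝ)) (M₂ : ℝ)
    (hbdd : ∀ f ∈ D, ∀ y : X, f y ≤ M₂)
    (hiso : ∀ (x : X) (m : ℝ), 0 < m → ∀ K : Set X, IsCompact K →
      ∀ U : Set X, IsOpen U → x ∈ U →
        ∃ f ∈ D, |f x| ≤ 1 / m ∧ (∀ y ∈ K, f y ≤ 0) ∧ ∀ y ∈ K \ U, f y ≤ -m)
    (x : X) (hx : J x ≠ ⊤)
    (K : Set X) (hKdef : K = {y | J y ≤ J x + (M₂ : EReal) + 2})
    (hKcomp : IsCompact K) (hxK : x ∈ K)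
    (d : X → X → ℝ)
    (hd_symm : ∀ y ∈ K, ∀ z ∈ K, d y z = d z y)
    (hd_eq : ∀ y ∈ K, ∀ z ∈ K, (d y z = 0 ↔ y = z))
    (hd_nonneg : ∀ y ∈ K, ∀ z ∈ K, 0 ≤ d y z)
    (hd_tri : ∀ y ∈ K, ∀ z ∈ K, ∀ w ∈ K, d y w ≤ d y z + d z w)
    (hd_cont : ContinuousOn (fun p : X × X => d p.1 p.2) (K ×ˢ K)) :
    ∃ f : ℕ → BoundedContinuousFunction X ℝ,
      (∀ m : ℕ, 1 ≤ m →
        f m ∈ D ∧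
        |f m x| ≤ 1 / (m : ℝ) ∧
        (∀ y ∈ K, f m y ≤ 0) ∧
        (∀ y ∈ K, 1 / (m : ℝ) ≤ d y x → f m y ≤ -(m : ℝ))) ∧
      Tendsto (fun m : ℕ => ⨆ y : X, ((f m y : EReal) - J y)) atTop (𝓝 (-(J x))) :=
  isolating_functions_approximate_general J hJ0 hlsc D M₂ hbdd hiso x hx K hKdef hKcomp hxK d hd_eq
    hd_nonneg hd_cont
end
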